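/- arXiv:1104.0196 — 2 statements merged into one kernel-verified Lean document; each statement's English description precedes it below -/
import Mathlib

section
/- Fix an integer n ≥ 1 and let c_* ∈ 𝒯_{2n}. Then the fiber ι^{-1}(c_*) ⊆ 𝒜¹_{2n} is nonempty (so ι is surjective), and the function (r_*, p_*) ↦ τ_{p_*} on ι^{-1}(c_*) attains its minimum at exactly one element, namely the pair (r_*, p_*) determined by: μ_e(r_*) = μ_e(c_*) and μ_e(p_*) = 0 for every even positive integer e, and μ_e(r_*) = 0 and μ_e(p_*) = μ_e(c_*) for every odd positive integer e. -/
/-- A partition: a nonincreasing list of positive integers (possibly empty). -/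
def IsPartition (p : List ℕ) : Prop := p.Pairwise (· ≥ ·) ∧ ∀ x ∈ p, 0 < x

/-- `𝒫̃`: partitions with an even number of parts in which the parts pair up:
`p₁ = p₂, p₃ = p₄, …` (stated 0-indexed). -/
def Ptilde : Set (List ℕ) :=
  {p | IsPartition p ∧ Even p.length ∧ ∀ i, p.getD (2 * i) 0 = p.getD (2 * i + 1) 0}

/-- `𝒮^κ` for `κ ∈ {0,1}`: partitions with all parts even (and, if `κ = 0`,
an even number of parts). -/
def SK (κ : ℕ) : Set (List ℕ) :=
  {r | IsPartition r ∧ (∀ x ∈ r, x % 2 = 0) ∧ (κ = 0 → Even r.length)}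

/-- `𝒮^κ_N`. -/
def SKN (κ N : ℕ) : Set (List ℕ) := {r | r ∈ SK κ ∧ r.sum = N}

/-- `𝒜^κ_{2n} = {(r_*, p_*) ∈ 𝒮^κ × 𝒫̃ : |r_*| + |p_*| = 2n}`. -/
def AK (κ n : ℕ) : Set (List ℕ × List ℕ) :=
  {rp | rp.1 ∈ SK κ ∧ rp.2 ∈ Ptilde ∧ rp.1.sum + rp.2.sum = 2 * n}

/-- The partition whose multiset of parts is the disjoint union of the multisets of
parts of `r` and `p`: sort `r ++ p` nonincreasingly. -/
def pmerge (r p : List ℕ) : List ℕ := (r ++ p).mergeSort (fun a b => decide (b ≤ a))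

/-- `𝒯_{2n}`: partitions of `2n` in which every odd part has even multiplicity. -/
def Tset (n : ℕ) : Set (List ℕ) :=
  {c | IsPartition c ∧ c.sum = 2 * n ∧ ∀ j, j % 2 = 1 → Even (c.count j)}


/-!
Every part of `r` is even, so the odd parts of `c` all land in `p`: the odd parts of `c`
form a sub-multiset of `p`. Hence `τ_p` is smallest exactly when `p` consists of the odd
parts of `c`, and then `r` must consist of the even parts. Conversely the odd parts of `c`
have even multiplicities, so sorted they pair up as `p₁ = p₂, p₃ = p₄, …`, which makes
this split an element of the fiber.
-/

lemma pmerge_perm (r p : List ℕ) : (pmerge r p).Perm (r ++ p) :=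
  List.mergeSort_perm _ _

lemma pmerge_pairwise_ge (r p : List ℕ) : (pmerge r p).Pairwise (· ≥ ·) :=
  (List.pairwise_mergeSort (le := fun a b : ℕ => decide (b ≤ a))
    (fun a b c hab hbc => by simp_all; omega) (fun a b => by simp; omega) (r ++ p)).imp
    (by simp)

lemma pmerge_eq_iff_perm {r p c : List ℕ} (hc : c.Pairwise (· ≥ ·)) :
    pmerge r p = c ↔ (r ++ p).Perm c :=
  ⟨fun h => h ▸ (pmerge_perm r p).symm,
    fun h => List.Perm.eq_of_pairwise' (pmerge_pairwise_ge r p) hc ((pmerge_perm r p).trans h)⟩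

section PairedParts

variable {α : Type*} [PartialOrder α]

lemma eq_of_mem_tail_of_pairwise_ge {a b : α} {q : List α}
    (hs : (a :: b :: q).Pairwise (· ≥ ·)) (ha : a ∈ b :: q) : a = b := by
  have hba : b ≤ a := List.rel_of_pairwise_cons hs List.mem_cons_self
  rcases List.mem_cons.mp ha with rfl | ha
  · rfl
  · exact le_antisymm (List.rel_of_pairwise_cons hs.of_cons ha) hba

variable [DecidableEq α]

lemma getD_pairs_of_even_count (d : α) : ∀ {p : List α}, p.Pairwise (· ≥ ·) →
    (∀ j, Even (p.count j)) → Even p.length ∧ ∀ i, p.getD (2 * i) d = p.getD (2 * i + 1) d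
  | [], _, _ => by simp
  | [a], _, he => by simpa using he a
  | a :: b :: q, hs, he => by
      have ha : a ∈ b :: q := by
        obtain ⟨k, hk⟩ := he a
        rw [List.count_cons_self] at hk
        exact List.count_pos_iff.mp (by omega)
      obtain rfl := eq_of_mem_tail_of_pairwise_ge hs ha
      have hq : ∀ j, Even (q.count j) := fun j => by
        have := he j
        by_cases hj : a = j <;> simp_all [List.count_cons, parity_simps]
      obtain ⟨hlen, hpair⟩ := getD_pairs_of_even_count d hs.of_cons.of_cons hq
      refine ⟨by simpa [parity_simps] using hlen, ?_⟩
      rintro (_ | i)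
      · rfl
      · simpa [Nat.mul_succ] using hpair i

end PairedParts

lemma mem_Ptilde_of_even_count {p : List ℕ} (hp : IsPartition p) (he : ∀ j, Even (p.count j)) :
    p ∈ Ptilde :=
  ⟨hp, getD_pairs_of_even_count 0 hp.1 he⟩

lemma IsPartition.filter {c : List ℕ} (hc : IsPartition c) (q : ℕ → Bool) :
    IsPartition (c.filter q) :=
  ⟨hc.1.filter q, fun x hx => hc.2 x (List.mem_of_mem_filter hx)⟩

def evenParts (c : List ℕ) : List ℕ := c.filter (fun x => x % 2 = 0)

def oddParts (c : List ℕ) : List ℕ := c.filter (fun x => x % 2 = 1)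

lemma count_filter_eq_ite {α : Type*} [DecidableEq α] (q : α → Bool) (c : List α) (a : α) :
    (c.filter q).count a = if q a then c.count a else 0 := by
  split_ifs with he
  · exact List.count_filter he
  · exact List.count_eq_zero_of_not_mem fun h => he (List.of_mem_filter h)

lemma count_evenParts (c : List ℕ) (e : ℕ) :
    (evenParts c).count e = if e % 2 = 0 then c.count e else 0 := by
  simp [evenParts, count_filter_eq_ite]

lemma count_oddParts (c : List ℕ) (e : ℕ) :
    (oddParts c).count e = if e % 2 = 1 then c.count e else 0 := by
  simp [oddParts, count_filter_eq_ite]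

lemma evenParts_append_oddParts_perm (c : List ℕ) : (evenParts c ++ oddParts c).Perm c := by
  have hodd : (fun x : ℕ => decide (x % 2 = 1)) = fun x => !decide (x % 2 = 0) := by
    funext x
    rcases Nat.mod_two_eq_zero_or_one x with h | h <;> simp [h]
  simpa [evenParts, oddParts, hodd] using List.filter_append_perm (fun x => decide (x % 2 = 0)) c

lemma evenParts_oddParts_mem_AK {n : ℕ} {c : List ℕ} (hc : c ∈ Tset n) :
    (evenParts c, oddParts c) ∈ AK 1 n := by
  obtain ⟨hcp, hsum, hodd⟩ := hc
  refine ⟨⟨hcp.filter _, fun x hx => by simpa using List.of_mem_filter hx, by omega⟩,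
    mem_Ptilde_of_even_count (hcp.filter _) fun j => ?_, ?_⟩
  · rw [count_oddParts]
    split_ifs with hj
    exacts [hodd j hj, Even.zero]
  · rw [← List.sum_append, (evenParts_append_oddParts_perm c).sum_eq, hsum]

lemma oddParts_subperm {r p c : List ℕ} (hr : ∀ x ∈ r, x % 2 = 0) (h : (r ++ p).Perm c) :
    (oddParts c).Subperm p := by
  have hr' : r.filter (fun x => x % 2 = 1) = [] :=
    List.filter_eq_nil_iff.mpr fun x hx => by simp [hr x hx]
  have := (h.filter (fun x => decide (x % 2 = 1))).symm
  rw [List.filter_append, hr', List.nil_append] at this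
  exact this.subperm.trans List.filter_sublist.subperm

lemma eq_evenParts_oddParts_of_length_le {r p c : List ℕ} (hc : c.Pairwise (· ≥ ·))
    (hr : r ∈ SK 1) (hp : p.Pairwise (· ≥ ·)) (h : (r ++ p).Perm c)
    (hlen : p.length ≤ (oddParts c).length) : r = evenParts c ∧ p = oddParts c := by
  have hpc : p.Perm (oddParts c) := ((oddParts_subperm hr.2.1 h).perm_of_length_le hlen).symm
  have hrc : r.Perm (evenParts c) :=
    (List.perm_append_right_iff p).mp <|
      h.trans ((evenParts_append_oddParts_perm c).symm.trans (hpc.symm.append_left _))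
  exact ⟨hrc.eq_of_pairwise' hr.1.1 (hc.filter _), hpc.eq_of_pairwise' hp (hc.filter _)⟩

theorem stmt0_general (n : ℕ) (c : List ℕ) (hc : c ∈ Tset n) :
    (∃ rp ∈ AK 1 n, pmerge rp.1 rp.2 = c) ∧
    ∃ rp : List ℕ × List ℕ,
      (rp ∈ AK 1 n ∧ pmerge rp.1 rp.2 = c) ∧
      (∀ e, 0 < e →
        (e % 2 = 0 → rp.1.count e = c.count e ∧ rp.2.count e = 0) ∧
        (e % 2 = 1 → rp.1.count e = 0 ∧ rp.2.count e = c.count e)) ∧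
      (∀ rp' : List ℕ × List ℕ, (rp' ∈ AK 1 n ∧ pmerge rp'.1 rp'.2 = c) →
        rp.2.length ≤ rp'.2.length ∧ (rp'.2.length = rp.2.length → rp' = rp)) := by
  have hcs : c.Pairwise (· ≥ ·) := hc.1.1
  have hfib : (evenParts c, oddParts c) ∈ AK 1 n ∧ pmerge (evenParts c) (oddParts c) = c :=
    ⟨evenParts_oddParts_mem_AK hc, (pmerge_eq_iff_perm hcs).mpr (evenParts_append_oddParts_perm c)⟩
  refine ⟨⟨_, hfib⟩, _, hfib, fun e _ => ?_, ?_⟩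
  · simp only [count_evenParts, count_oddParts]
    constructor <;> intro he <;> simp [he]
  · rintro ⟨r, p⟩ ⟨⟨hr, hp, -⟩, hmerge⟩
    have h := (pmerge_eq_iff_perm hcs).mp hmerge
    refine ⟨(oddParts_subperm hr.2.1 h).length_le, fun hlen => ?_⟩
    obtain ⟨rfl, rfl⟩ := eq_evenParts_oddParts_of_length_le hcs hr hp.1.1 h hlen.le
    rfl

/-- for `n ≥ 1` and `c ∈ 𝒯_{2n}`, the fiber of
`ι : 𝒜¹_{2n} → 𝒯_{2n}` over `c` is nonempty, and the function `(r,p) ↦ τ_p` on the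
fiber attains its minimum at exactly one element, namely the pair with
`μ_e(r) = μ_e(c)`, `μ_e(p) = 0` for even positive `e`, and
`μ_e(r) = 0`, `μ_e(p) = μ_e(c)` for odd `e`. -/
theorem stmt0 (n : ℕ) (hn : 1 ≤ n) (c : List ℕ) (hc : c ∈ Tset n) :
    (∃ rp ∈ AK 1 n, pmerge rp.1 rp.2 = c) ∧
    ∃ rp : List ℕ × List ℕ,
      (rp ∈ AK 1 n ∧ pmerge rp.1 rp.2 = c) ∧
      (∀ e, 0 < e →
        (e % 2 = 0 → rp.1.count e = c.count e ∧ rp.2.count e = 0) ∧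
        (e % 2 = 1 → rp.1.count e = 0 ∧ rp.2.count e = c.count e)) ∧
      (∀ rp' : List ℕ × List ℕ, (rp' ∈ AK 1 n ∧ pmerge rp'.1 rp'.2 = c) →
        rp.2.length ≤ rp'.2.length ∧ (rp'.2.length = rp.2.length → rp' = rp)) :=
  stmt0_general n c hc
end

section
/- Fix an integer n ≥ 1 and let (c_*, ε) ∈ 𝒯̃^{(2)}_{2n}. Then the fiber of the restriction ι̃^{(2)} : 𝒜⁰_{2n} → 𝒯̃^{(2)}_{2n} of ι^{(2)} over (c_*, ε) is nonempty, and the function (r_*, p_*) ↦ τ_{p_*} on this fiber attains its minimum at exactly one element (namely the element described by: μ_e(r_*) = 0 and μ_e(p_*) = μ_e(c_*) whenever e is odd, and also whenever e is even with μ_e(c_*) even and positive and ε(e) = 0; and μ_e(r_*) = μ_e(c_*) and μ_e(p_*) = 0 for all other positive integers e). -/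
/-- The domain of the function `ε` in a pair `(c_*, ε) ∈ 𝒯^{(2)}_{2n}`: even positive
integers `j` whose multiplicity in `c_*` is even and positive. -/
def epsDom (c : List ℕ) (j : ℕ) : Prop :=
  j % 2 = 0 ∧ 0 < j ∧ Even (c.count j) ∧ 0 < c.count j

/-!
Every element `(r, p)` of the fiber must put certain parts `e` of `c` entirely into `p`:
the odd ones, because `r` has only even parts, and the even ones in the domain of `ε` with
`ε e = 0`, because such an `e` is not a part of `r`. Let `p⁰` consist of exactly these parts
(with their multiplicity in `c`) and `r⁰` of the remaining ones. A nonincreasing list pairs up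
as `p₁ = p₂, p₃ = p₄, …` iff all its multiplicities are even, so `p⁰ ∈ 𝒫̃`; `r⁰` has even
parts and `τ_{r⁰} = τ_c - τ_{p⁰}` is even, so `(r⁰, p⁰)` lies in the fiber. Any `(r, p)` in
the fiber has `p⁰ ⊆ p` as multisets, hence `τ_{p⁰} ≤ τ_p`, with equality only if `p = p⁰`
and then `r = r⁰`, sorted lists being determined by their multisets.
-/

section PairsUp

variable {α : Type*} (d : α)

/-- The pairing condition of `Ptilde`; `d` is what `getD` returns past the end. -/
def PairsUp (l : List α) : Prop :=
  Even l.length ∧ ∀ i, l.getD (2 * i) d = l.getD (2 * i + 1) d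

lemma pairsUp_nil : PairsUp d ([] : List α) := by
  simp [PairsUp]

lemma not_pairsUp_singleton (a : α) : ¬PairsUp d [a] := by
  simp [PairsUp]

lemma pairsUp_cons_cons {a b : α} {t : List α} :
    PairsUp d (a :: b :: t) ↔ a = b ∧ PairsUp d t := by
  simp only [PairsUp, List.length_cons, Nat.even_add_one, not_not]
  constructor
  · rintro ⟨hlen, h⟩
    exact ⟨by simpa using h 0, hlen, fun i => by simpa [Nat.mul_succ] using h (i + 1)⟩
  · rintro ⟨rfl, hlen, h⟩
    refine ⟨hlen, fun i => ?_⟩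
    cases i with
    | zero => rfl
    | succ i => simpa [Nat.mul_succ] using h i

variable [DecidableEq α]

lemma even_count_cons_cons_self_iff {a e : α} {t : List α} :
    Even ((a :: a :: t).count e) ↔ Even (t.count e) := by
  by_cases h : a = e <;> simp [h, Nat.even_add_one]

lemma PairsUp.even_count : ∀ {l : List α}, PairsUp d l → ∀ e, Even (l.count e)
  | [], _, _ => by simp
  | [a], h, _ => absurd h (not_pairsUp_singleton d a)
  | _ :: _ :: _, h, e => by
    obtain ⟨rfl, ht⟩ := (pairsUp_cons_cons d).1 h
    exact even_count_cons_cons_self_iff.2 (ht.even_count e)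

lemma pairsUp_of_even_count [PartialOrder α] :
    ∀ {l : List α}, l.Pairwise (· ≥ ·) → (∀ e, Even (l.count e)) → PairsUp d l
  | [], _, _ => pairsUp_nil d
  | [a], _, h => absurd (h a) (by simp)
  | a :: b :: t, hs, h => by
    have hab : a = b := by
      have hpos : 0 < (b :: t).count a :=
        Nat.pos_of_ne_zero fun h0 => by simpa [List.count_cons, h0] using h a
      rcases List.mem_cons.1 (List.count_pos_iff.1 hpos) with rfl | hat
      · rfl
      · exact le_antisymm ((List.pairwise_cons.1 hs.tail).1 a hat)
          ((List.pairwise_cons.1 hs).1 b List.mem_cons_self)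
    subst hab
    exact (pairsUp_cons_cons d).2
      ⟨rfl, pairsUp_of_even_count hs.tail.tail fun e => even_count_cons_cons_self_iff.1 (h e)⟩

end PairsUp

lemma mem_Ptilde_iff {p : List ℕ} : p ∈ Ptilde ↔ IsPartition p ∧ ∀ e, Even (p.count e) :=
  ⟨fun ⟨hp, hpairs⟩ => ⟨hp, PairsUp.even_count 0 hpairs⟩,
    fun ⟨hp, he⟩ => ⟨hp, pairsUp_of_even_count 0 hp.1 he⟩⟩

section Fiber

variable {n : ℕ} {c : List ℕ} {ε : ℕ → ℕ}

def fiber (n : ℕ) (c : List ℕ) (ε : ℕ → ℕ) : Set (List ℕ × List ℕ) :=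
  {rp | rp ∈ AK 0 n ∧ pmerge rp.1 rp.2 = c ∧ ∀ j, epsDom c j → (ε j = 1 ↔ j ∈ rp.1)}

def ForcedIntoP (c : List ℕ) (ε : ℕ → ℕ) (e : ℕ) : Prop :=
  e % 2 = 1 ∨ (e % 2 = 0 ∧ Even (c.count e) ∧ 0 < c.count e ∧ ε e = 0)

instance (c : List ℕ) (ε : ℕ → ℕ) : DecidablePred (ForcedIntoP c ε) :=
  fun _ => inferInstanceAs (Decidable (_ ∨ _))

def minimalPreimage (c : List ℕ) (ε : ℕ → ℕ) : List ℕ × List ℕ :=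
  (c.filter fun e => !decide (ForcedIntoP c ε e), c.filter fun e => decide (ForcedIntoP c ε e))

lemma count_minimalPreimage_fst (e : ℕ) :
    (minimalPreimage c ε).1.count e = if ForcedIntoP c ε e then 0 else c.count e := by
  simpa [minimalPreimage, ite_not] using
    Multiset.count_filter (a := e) (s := (c : Multiset ℕ)) (p := fun e => ¬ForcedIntoP c ε e)

lemma count_minimalPreimage_snd (e : ℕ) :
    (minimalPreimage c ε).2.count e = if ForcedIntoP c ε e then c.count e else 0 := by
  simpa [minimalPreimage] using Multiset.count_filter (a := e) (s := (c : Multiset ℕ)) (p := ForcedIntoP c ε)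

lemma mem_minimalPreimage_fst {x : ℕ} :
    x ∈ (minimalPreimage c ε).1 ↔ x ∈ c ∧ ¬ForcedIntoP c ε x := by
  simp [minimalPreimage]

lemma minimalPreimage_perm : ((minimalPreimage c ε).1 ++ (minimalPreimage c ε).2).Perm c :=
  List.perm_append_comm.trans (List.filter_append_perm _ c)

lemma minimalPreimage_mem_fiber (hc : c ∈ Tset n) (hclen : Even c.length)
    (hε : ∀ j, epsDom c j → ε j ≤ 1) : minimalPreimage c ε ∈ fiber n c ε := by
  obtain ⟨hcpart, hcsum, hcodd⟩ := hc
  have hperm := minimalPreimage_perm (c := c) (ε := ε)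
  have hp : (minimalPreimage c ε).2 ∈ Ptilde := by
    refine mem_Ptilde_iff.2 ⟨hcpart.filter _, fun e => ?_⟩
    rw [count_minimalPreimage_snd]
    split_ifs with he
    · rcases he with hodd | ⟨-, heven, -⟩
      exacts [hcodd e hodd, heven]
    · exact Even.zero
  have hr_even : ∀ x ∈ (minimalPreimage c ε).1, x % 2 = 0 := fun x hx => by
    have := (mem_minimalPreimage_fst.1 hx).2
    simp only [ForcedIntoP, not_or] at this
    omega
  have hr_len : Even (minimalPreimage c ε).1.length := by
    rw [← hperm.length_eq, List.length_append, Nat.even_add] at hclen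
    exact hclen.2 hp.2.1
  refine ⟨⟨⟨hcpart.filter _, hr_even, fun _ => hr_len⟩, hp, ?_⟩,
    (pmerge_eq_iff_perm hcpart.1).2 hperm, fun j hj => ?_⟩
  · rw [← List.sum_append, hperm.sum_eq, hcsum]
  · have hεj := hε j hj
    obtain ⟨hj2, -, hjeven, hjpos⟩ := hj
    simp only [mem_minimalPreimage_fst, List.count_pos_iff.1 hjpos, ForcedIntoP, hjeven, hjpos,
      true_and, not_or, not_and]
    omega

lemma perm_of_mem_fiber (hc : c.Pairwise (· ≥ ·)) {rp : List ℕ × List ℕ}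
    (hrp : rp ∈ fiber n c ε) : (rp.1 ++ rp.2).Perm c :=
  (pmerge_eq_iff_perm hc).1 hrp.2.1

lemma count_fst_eq_zero_of_forcedIntoP (hc : IsPartition c) {rp : List ℕ × List ℕ}
    (hrp : rp ∈ fiber n c ε) {e : ℕ} (he : ForcedIntoP c ε e) : rp.1.count e = 0 := by
  refine List.count_eq_zero.2 fun hmem => ?_
  rcases he with hodd | ⟨he2, heven, hpos, hε0⟩
  · have := hrp.1.1.2.1 e hmem
    omega
  · have := (hrp.2.2 e ⟨he2, hc.2 e (List.count_pos_iff.1 hpos), heven, hpos⟩).2 hmem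
    omega

lemma minimalPreimage_snd_subperm (hc : IsPartition c) {rp : List ℕ × List ℕ}
    (hrp : rp ∈ fiber n c ε) : (minimalPreimage c ε).2.Subperm rp.2 := by
  refine List.subperm_ext_iff.2 fun e _ => ?_
  rw [count_minimalPreimage_snd]
  split_ifs with he
  · have := (perm_of_mem_fiber hc.1 hrp).count_eq e
    rw [List.count_append, count_fst_eq_zero_of_forcedIntoP hc hrp he] at this
    omega
  · exact Nat.zero_le _

lemma eq_minimalPreimage_of_length_eq (hc : IsPartition c) (hm : minimalPreimage c ε ∈ fiber n c ε)
    {rp : List ℕ × List ℕ} (hrp : rp ∈ fiber n c ε)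
    (hlen : rp.2.length = (minimalPreimage c ε).2.length) : rp = minimalPreimage c ε := by
  have hp : rp.2 = (minimalPreimage c ε).2 :=
    List.Perm.eq_of_pairwise' hrp.1.2.1.1.1 hm.1.2.1.1.1
      ((minimalPreimage_snd_subperm hc hrp).perm_of_length_le hlen.le).symm
  have hr : rp.1.Perm (minimalPreimage c ε).1 := by
    refine (List.perm_append_right_iff rp.2).1 ((perm_of_mem_fiber hc.1 hrp).trans ?_)
    rw [hp]
    exact (perm_of_mem_fiber hc.1 hm).symm
  exact Prod.ext (List.Perm.eq_of_pairwise' hrp.1.1.1.1 hm.1.1.1.1 hr) hp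

end Fiber

theorem stmt2_general (n : ℕ) (c : List ℕ) (ε : ℕ → ℕ)
    (hc : c ∈ Tset n) (hclen : Even c.length) (hε : ∀ j, epsDom c j → ε j ≤ 1) :
    (∃ rp, (rp ∈ AK 0 n ∧ pmerge rp.1 rp.2 = c ∧
        ∀ j, epsDom c j → (ε j = 1 ↔ j ∈ rp.1))) ∧
    ∃ rp : List ℕ × List ℕ,
      (rp ∈ AK 0 n ∧ pmerge rp.1 rp.2 = c ∧
        ∀ j, epsDom c j → (ε j = 1 ↔ j ∈ rp.1)) ∧
      (∀ e, 0 < e →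
        ((e % 2 = 1 ∨ (e % 2 = 0 ∧ Even (c.count e) ∧ 0 < c.count e ∧ ε e = 0)) →
          rp.1.count e = 0 ∧ rp.2.count e = c.count e) ∧
        (¬(e % 2 = 1 ∨ (e % 2 = 0 ∧ Even (c.count e) ∧ 0 < c.count e ∧ ε e = 0)) →
          rp.1.count e = c.count e ∧ rp.2.count e = 0)) ∧
      (∀ rp' : List ℕ × List ℕ,
        (rp' ∈ AK 0 n ∧ pmerge rp'.1 rp'.2 = c ∧
          ∀ j, epsDom c j → (ε j = 1 ↔ j ∈ rp'.1)) →
        rp.2.length ≤ rp'.2.length ∧ (rp'.2.length = rp.2.length → rp' = rp)) := by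
  have hm : minimalPreimage c ε ∈ fiber n c ε := minimalPreimage_mem_fiber hc hclen hε
  refine ⟨⟨_, hm⟩, _, hm, fun e _ => ⟨fun he => ?_, fun he => ?_⟩, fun rp hrp => ⟨?_, ?_⟩⟩
  · change ForcedIntoP c ε e at he
    simp [count_minimalPreimage_fst, count_minimalPreimage_snd, he]
  · change ¬ForcedIntoP c ε e at he
    simp [count_minimalPreimage_fst, count_minimalPreimage_snd, he]
  · exact (minimalPreimage_snd_subperm hc.1 hrp).length_le
  · exact eq_minimalPreimage_of_length_eq hc.1 hm hrp

/-- for `n ≥ 1` and `(c, ε) ∈ 𝒯̃^{(2)}_{2n}` (so `τ_c` is even), the fiber of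
the restriction `ι̃^{(2)} : 𝒜⁰_{2n} → 𝒯̃^{(2)}_{2n}` over `(c, ε)` is nonempty and the
function `(r,p) ↦ τ_p` attains its minimum on this fiber at exactly one element,
namely the explicitly described one. -/
theorem stmt2 (n : ℕ) (hn : 1 ≤ n) (c : List ℕ) (ε : ℕ → ℕ)
    (hc : c ∈ Tset n) (hclen : Even c.length) (hε : ∀ j, epsDom c j → ε j ≤ 1) :
    (∃ rp, (rp ∈ AK 0 n ∧ pmerge rp.1 rp.2 = c ∧
        ∀ j, epsDom c j → (ε j = 1 ↔ j ∈ rp.1))) ∧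
    ∃ rp : List ℕ × List ℕ,
      (rp ∈ AK 0 n ∧ pmerge rp.1 rp.2 = c ∧
        ∀ j, epsDom c j → (ε j = 1 ↔ j ∈ rp.1)) ∧
      (∀ e, 0 < e →
        ((e % 2 = 1 ∨ (e % 2 = 0 ∧ Even (c.count e) ∧ 0 < c.count e ∧ ε e = 0)) →
          rp.1.count e = 0 ∧ rp.2.count e = c.count e) ∧
        (¬(e % 2 = 1 ∨ (e % 2 = 0 ∧ Even (c.count e) ∧ 0 < c.count e ∧ ε e = 0)) →
          rp.1.count e = c.count e ∧ rp.2.count e = 0)) ∧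
      (∀ rp' : List ℕ × List ℕ,
        (rp' ∈ AK 0 n ∧ pmerge rp'.1 rp'.2 = c ∧
          ∀ j, epsDom c j → (ε j = 1 ↔ j ∈ rp'.1)) →
        rp.2.length ≤ rp'.2.length ∧ (rp'.2.length = rp.2.length → rp' = rp)) :=
  stmt2_general n c ε hc hclen hε
end
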